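/- Let C be a bivariate copula admitting a tail dependence function Λ. Then Λ(u,v) = 0 for all (u,v) ∈ [0,∞)² if and only if there exist u₀ > 0 and v₀ > 0 with Λ(u₀, v₀) = 0. -/

import Mathlib

open MeasureTheory Filter Set

/-- A bivariate copula: `C : [0,1]² → [0,1]` with the grounded/marginal conditions and
the 2-increasing property. -/
def IsCopula (C : ℝ → ℝ → ℝ) : Prop :=
  (∀ u ∈ Icc (0:ℝ) 1, ∀ v ∈ Icc (0:ℝ) 1, C u v ∈ Icc (0:ℝ) 1) ∧
  (∀ u ∈ Icc (0:ℝ) 1, C u 0 = 0 ∧ C 0 u = 0 ∧ C u 1 = u ∧ C 1 u = u) ∧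
  (∀ u u' v v' : ℝ, u ∈ Icc (0:ℝ) 1 → u' ∈ Icc (0:ℝ) 1 →
    v ∈ Icc (0:ℝ) 1 → v' ∈ Icc (0:ℝ) 1 → u ≤ u' → v ≤ v' →
    0 ≤ C u' v' - C u' v - C u v' + C u v)

/-- `Λ` is the tail dependence function of `C`:
`Λ(u,v) = lim_{p↓0} C(pu,pv)/p` for every `(u,v) ∈ [0,∞)²`. -/
def HasTDF (C Λ : ℝ → ℝ → ℝ) : Prop :=
  ∀ u v : ℝ, 0 ≤ u → 0 ≤ v →
    Tendsto (fun p : ℝ => C (p * u) (p * v) / p)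
      (nhdsWithin (0:ℝ) (Ioi 0)) (nhds (Λ u v))


/-!
Scaling `p ↦ p t` in the defining limit shows that `Λ` is positively homogeneous,
`Λ (t u) (t v) = t Λ u v`, and the monotonicity of a copula passes to `Λ`, which is also
nonnegative. Given `Λ u₀ v₀ = 0` with `u₀, v₀ > 0`, every `(u, v)` lies below some
`(t u₀, t v₀)`, so `0 ≤ Λ u v ≤ t Λ u₀ v₀ = 0`.
-/

open Topology

lemma tendsto_mul_const_nhdsGT_zero {t : ℝ} (ht : 0 < t) :
    Tendsto (fun p : ℝ => p * t) (𝓝[>] 0) (𝓝[>] 0) := by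
  refine tendsto_nhdsWithin_of_tendsto_nhds_of_eventually_within _ ?_ ?_
  · simpa using (tendsto_id.mul_const t).mono_left (nhdsWithin_le_nhds (a := (0:ℝ)))
  · filter_upwards [self_mem_nhdsWithin] with p hp using mul_pos hp ht

lemma eventually_mul_mem_unitInterval {u : ℝ} (hu : 0 ≤ u) :
    ∀ᶠ p in 𝓝[>] (0:ℝ), p * u ∈ Icc (0:ℝ) 1 := by
  have : Tendsto (fun p : ℝ => p * u) (𝓝[>] 0) (𝓝[≥] 0) := by
    refine tendsto_nhdsWithin_of_tendsto_nhds_of_eventually_within _ ?_ ?_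
    · simpa using (tendsto_id.mul_const u).mono_left (nhdsWithin_le_nhds (a := (0:ℝ)))
    · filter_upwards [self_mem_nhdsWithin] with p hp using mul_nonneg (le_of_lt hp) hu
  exact this (Icc_mem_nhdsGE zero_lt_one)

namespace IsCopula

variable {C : ℝ → ℝ → ℝ}

lemma nonneg (hC : IsCopula C) {u v : ℝ} (hu : u ∈ Icc (0:ℝ) 1) (hv : v ∈ Icc (0:ℝ) 1) :
    0 ≤ C u v :=
  (hC.1 u hu v hv).1

lemma mono (hC : IsCopula C) {u u' v v' : ℝ}
    (hu : u ∈ Icc (0:ℝ) 1) (hu' : u' ∈ Icc (0:ℝ) 1) (hv : v ∈ Icc (0:ℝ) 1)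
    (hv' : v' ∈ Icc (0:ℝ) 1) (huu' : u ≤ u') (hvv' : v ≤ v') : C u v ≤ C u' v' := by
  obtain ⟨-, hground, hrect⟩ := hC
  have h0 : (0:ℝ) ∈ Icc (0:ℝ) 1 := ⟨le_rfl, zero_le_one⟩
  -- the rectangles `[u, u'] × [0, v]` and `[0, u'] × [v, v']` have nonnegative mass
  have hfirst := hrect u u' 0 v hu hu' h0 hv huu' hv.1
  have hsecond := hrect 0 u' v v' h0 hu' hv hv' hu'.1 hvv'
  linarith [(hground u hu).1, (hground u' hu').1, (hground v hv).2.1, (hground v' hv').2.1]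

end IsCopula

namespace HasTDF

variable {C Λ : ℝ → ℝ → ℝ}

lemma homogeneous (hΛ : HasTDF C Λ) {u v t : ℝ} (hu : 0 ≤ u) (hv : 0 ≤ v) (ht : 0 < t) :
    Λ (t * u) (t * v) = t * Λ u v := by
  have hscaled : Tendsto (fun p : ℝ => t * (C (p * t * u) (p * t * v) / (p * t)))
      (𝓝[>] 0) (𝓝 (t * Λ u v)) :=
    (((hΛ u v hu hv).comp (tendsto_mul_const_nhdsGT_zero ht)).const_mul t)
  refine tendsto_nhds_unique (hΛ _ _ (mul_nonneg ht.le hu) (mul_nonneg ht.le hv))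
    (hscaled.congr' ?_)
  filter_upwards [self_mem_nhdsWithin] with p (hp : 0 < p)
  rw [mul_assoc p t u, mul_assoc p t v]
  field_simp [hp.ne', ht.ne']

lemma nonneg (hC : IsCopula C) (hΛ : HasTDF C Λ) {u v : ℝ} (hu : 0 ≤ u) (hv : 0 ≤ v) :
    0 ≤ Λ u v := by
  refine ge_of_tendsto (hΛ u v hu hv) ?_
  filter_upwards [self_mem_nhdsWithin, eventually_mul_mem_unitInterval hu,
    eventually_mul_mem_unitInterval hv] with p (hp : 0 < p) hpu hpv
  exact div_nonneg (hC.nonneg hpu hpv) hp.le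

lemma mono (hC : IsCopula C) (hΛ : HasTDF C Λ) {u u' v v' : ℝ} (hu : 0 ≤ u) (hv : 0 ≤ v)
    (huu' : u ≤ u') (hvv' : v ≤ v') : Λ u v ≤ Λ u' v' := by
  have hu' := hu.trans huu'
  have hv' := hv.trans hvv'
  refine le_of_tendsto_of_tendsto (hΛ u v hu hv) (hΛ u' v' hu' hv') ?_
  filter_upwards [self_mem_nhdsWithin, eventually_mul_mem_unitInterval hu,
    eventually_mul_mem_unitInterval hu', eventually_mul_mem_unitInterval hv,
    eventually_mul_mem_unitInterval hv'] with p (hp : 0 < p) hpu hpu' hpv hpv'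
  gcongr
  exact hC.mono hpu hpu' hpv hpv' (by gcongr) (by gcongr)

end HasTDF

theorem tdf_degeneracy (C Λ : ℝ → ℝ → ℝ)
    (hC : IsCopula C) (hΛ : HasTDF C Λ) :
    (∀ u v : ℝ, 0 ≤ u → 0 ≤ v → Λ u v = 0) ↔
      ∃ u₀ v₀ : ℝ, 0 < u₀ ∧ 0 < v₀ ∧ Λ u₀ v₀ = 0 := by
  refine ⟨fun h => ⟨1, 1, one_pos, one_pos, h 1 1 zero_le_one zero_le_one⟩, ?_⟩
  rintro ⟨u₀, v₀, hu₀, hv₀, hzero⟩ u v hu hv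
  obtain ⟨t, ht, hut, hvt⟩ : ∃ t > 0, u / u₀ ≤ t ∧ v / v₀ ≤ t :=
    ⟨u / u₀ + v / v₀ + 1, by positivity, by linarith [div_nonneg hv hv₀.le],
      by linarith [div_nonneg hu hu₀.le]⟩
  rw [div_le_iff₀ hu₀] at hut
  rw [div_le_iff₀ hv₀] at hvt
  have hle : Λ u v ≤ 0 := calc
    Λ u v ≤ Λ (t * u₀) (t * v₀) := hΛ.mono hC hu hv hut hvt
    _ = t * Λ u₀ v₀ := hΛ.homogeneous hu₀.le hv₀.le ht
    _ = 0 := by rw [hzero, mul_zero]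
  exact le_antisymm hle (hΛ.nonneg hC hu hv)
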